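/- arXiv:1302.1730 — 2 statements merged into one kernel-verified Lean document; each statement's English description precedes it below -/
import Mathlib

section
/- Let k be a field and B ⊆ A a subring pair of finite-dimensional k-algebras with 1_B = 1_A. If the enveloping algebra B^e = B ⊗_k B^op has finite representation type with n_{B^e} isomorphism classes of finitely generated indecomposable modules, then the minimum depth satisfies d(B,A) ≤ 1 + 2·n_{B^e}. -/
/-! # Depth of subring extensions (Kadison–Young)
For a unital subring `B ⊆ A`, `CC B n` realizes the `n`-fold relative tensor power
`C_n(A,B) = A ⊗_B ⋯ ⊗_B A` (with `C_0(A,B) = B`) as a quotient of the iterated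
tensor power over `ℤ` by the middle `B`-balancing relations, together with its
natural left/right `A`- and `B`-actions.  Bimodule maps, the divisibility relation
`M ∣ q ⬝ N`, H-equivalence, the depth conditions and the minimum depth `d(B,A) ∈ ℕ∞`
are then defined exactly as in the paper. -/

open TensorProduct

universe u

variable (A : Type u) [Ring A]

/-- `Tpow A n` is the `(n+1)`-fold tensor power `A ⊗ℤ ⋯ ⊗ℤ A`. -/
noncomputable def Tpow : ℕ → ModuleCat.{u} ℤ
  | 0 => ModuleCat.of ℤ A
  | n + 1 => ModuleCat.of ℤ (A ⊗[ℤ] (Tpow n : Type u))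

/-- Multiplication by `a : A` on the leftmost tensor factor. -/
noncomputable def lmulT (a : A) : ∀ n, (Tpow A n : Type u) →ₗ[ℤ] (Tpow A n : Type u)
  | 0 => (LinearMap.mulLeft ℤ a : A →ₗ[ℤ] A)
  | n + 1 => LinearMap.rTensor (Tpow A n : Type u) (LinearMap.mulLeft ℤ a)

/-- Multiplication by `a : A` on the rightmost tensor factor. -/
noncomputable def rmulT (a : A) : ∀ n, (Tpow A n : Type u) →ₗ[ℤ] (Tpow A n : Type u)
  | 0 => (LinearMap.mulRight ℤ a : A →ₗ[ℤ] A)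
  | n + 1 => LinearMap.lTensor A (rmulT a n)

private theorem lmulT_succ_apply (a : A) (n : ℕ) (x : A ⊗[ℤ] (Tpow A n : Type u)) :
    lmulT A a (n+1) x = LinearMap.rTensor (Tpow A n : Type u) (LinearMap.mulLeft ℤ a) x := rfl

private theorem rmulT_succ_apply (a : A) (n : ℕ) (x : A ⊗[ℤ] (Tpow A n : Type u)) :
    rmulT A a (n+1) x = LinearMap.lTensor A (rmulT A a n) x := rfl

private theorem auxcomm (M : Type u) [AddCommGroup M] [Module ℤ M] (a : A) (g : M →ₗ[ℤ] M)
    (x : A ⊗[ℤ] M) :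
    (LinearMap.rTensor M (LinearMap.mulLeft ℤ a)) ((LinearMap.lTensor A g) x) =
    (LinearMap.lTensor A g) ((LinearMap.rTensor M (LinearMap.mulLeft ℤ a)) x) := by
  induction x using TensorProduct.induction_on with
  | zero => simp
  | tmul c t => simp
  | add y z hy hz => simp only [map_add, hy, hz]

theorem lmulT_rmulT_comm (a b : A) : ∀ (n : ℕ) (x : (Tpow A n : Type u)),
    lmulT A a n (rmulT A b n x) = rmulT A b n (lmulT A a n x)
  | 0, x => (mul_assoc a x b).symm
  | n + 1, x => by
    show (lmulT A a (n+1)) ((rmulT A b (n+1)) x) = (rmulT A b (n+1)) ((lmulT A a (n+1)) x)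
    rw [lmulT, rmulT]
    exact auxcomm A (Tpow A n : Type u) a (rmulT A b n) x

private theorem aux1 (M : Type u) [AddCommGroup M] [Module ℤ M] (a c d : A) (t s : M) :
    LinearMap.rTensor M (LinearMap.mulLeft ℤ a) (c ⊗ₜ[ℤ] t - d ⊗ₜ[ℤ] s) =
      (a * c) ⊗ₜ[ℤ] t - (a * d) ⊗ₜ[ℤ] s := by simp

private theorem aux2 (M : Type u) [AddCommGroup M] [Module ℤ M] (g : M →ₗ[ℤ] M) (c d : A)
    (t s : M) :
    LinearMap.lTensor A g (c ⊗ₜ[ℤ] t - d ⊗ₜ[ℤ] s) = c ⊗ₜ[ℤ] (g t) - d ⊗ₜ[ℤ] (g s) := by simp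

private theorem aux3 (M : Type u) [AddCommGroup M] [Module ℤ M] (a c : A) (t : M) :
    LinearMap.rTensor M (LinearMap.mulLeft ℤ a) (c ⊗ₜ[ℤ] t) = (a * c) ⊗ₜ[ℤ] t := by simp

private theorem aux4 (M : Type u) [AddCommGroup M] [Module ℤ M] (g : M →ₗ[ℤ] M) (c : A) (t : M) :
    LinearMap.lTensor A g (c ⊗ₜ[ℤ] t) = c ⊗ₜ[ℤ] (g t) := by simp


variable {A}

/-- The `B`-balancing relations inside `Tpow A n`. -/
noncomputable def rel (B : Subring A) : ∀ n, Submodule ℤ (Tpow A n : Type u)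
  | 0 => ⊥
  | n + 1 =>
      Submodule.span ℤ
        {x : (Tpow A (n+1) : Type u) |
          (∃ (a : A) (b : B) (t : (Tpow A n : Type u)),
            x = ((a * (b : A)) ⊗ₜ[ℤ] t : A ⊗[ℤ] (Tpow A n : Type u)) -
                 a ⊗ₜ[ℤ] (lmulT A (b : A) n t)) ∨
          (∃ (a : A) (r : (Tpow A n : Type u)), r ∈ rel B n ∧
            x = (a ⊗ₜ[ℤ] r : A ⊗[ℤ] (Tpow A n : Type u)))}

theorem rel_succ (B : Subring A) (n : ℕ) :
    rel B (n+1) =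
      Submodule.span ℤ
        {x : (Tpow A (n+1) : Type u) |
          (∃ (a : A) (b : B) (t : (Tpow A n : Type u)),
            x = ((a * (b : A)) ⊗ₜ[ℤ] t : A ⊗[ℤ] (Tpow A n : Type u)) -
                 a ⊗ₜ[ℤ] (lmulT A (b : A) n t)) ∨
          (∃ (a : A) (r : (Tpow A n : Type u)), r ∈ rel B n ∧
            x = (a ⊗ₜ[ℤ] r : A ⊗[ℤ] (Tpow A n : Type u)))} := rfl

theorem rel_le_comap_lmulT (B : Subring A) (a : A) :
    ∀ n, rel B n ≤ (rel B n).comap (lmulT A a n)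
  | 0 => bot_le
  | n + 1 => by
    rw [rel_succ, Submodule.span_le]
    rintro x (⟨a', b, t, rfl⟩ | ⟨a', r, hr, rfl⟩) <;>
      apply Submodule.mem_comap.mpr <;> rw [lmulT_succ_apply]
    · rw [map_sub, LinearMap.rTensor_tmul, LinearMap.rTensor_tmul, LinearMap.mulLeft_apply,
        LinearMap.mulLeft_apply]
      refine Submodule.subset_span (Or.inl ⟨a * a', b, t, ?_⟩)
      rw [mul_assoc]
    · rw [LinearMap.rTensor_tmul, LinearMap.mulLeft_apply]
      exact Submodule.subset_span (Or.inr ⟨a * a', r, hr, rfl⟩)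

theorem rel_le_comap_rmulT (B : Subring A) (a : A) :
    ∀ n, rel B n ≤ (rel B n).comap (rmulT A a n)
  | 0 => bot_le
  | n + 1 => by
    rw [rel_succ, Submodule.span_le]
    rintro x (⟨a', b, t, rfl⟩ | ⟨a', r, hr, rfl⟩) <;>
      apply Submodule.mem_comap.mpr <;> rw [rmulT_succ_apply]
    · rw [map_sub, LinearMap.lTensor_tmul, LinearMap.lTensor_tmul, ← lmulT_rmulT_comm]
      exact Submodule.subset_span (Or.inl ⟨a', b, rmulT A a n t, rfl⟩)
    · rw [LinearMap.lTensor_tmul]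
      exact Submodule.subset_span
        (Or.inr ⟨a', rmulT A a n r, rel_le_comap_rmulT B a n hr, rfl⟩)

/-- `CC B n` is `C_n(A,B) = A ⊗_B ⋯ ⊗_B A` (`n` factors of `A`), with `CC B 0 = B`. -/
noncomputable def CC (B : Subring A) : ℕ → ModuleCat.{u} ℤ
  | 0 => ModuleCat.of ℤ B
  | n + 1 => @ModuleCat.of ℤ _ ((Tpow A n : Type u) ⧸ rel B n) _ (Submodule.Quotient.module _)

/-- The left `A`-action on `C_{n+1}(A,B)`. -/
noncomputable def lA (B : Subring A) (a : A) (n : ℕ) :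
    (CC B (n+1) : Type u) →ₗ[ℤ] (CC B (n+1) : Type u) :=
  Submodule.mapQ _ _ (lmulT A a n) (rel_le_comap_lmulT B a n)

/-- The right `A`-action on `C_{n+1}(A,B)`. -/
noncomputable def rA (B : Subring A) (a : A) (n : ℕ) :
    (CC B (n+1) : Type u) →ₗ[ℤ] (CC B (n+1) : Type u) :=
  Submodule.mapQ _ _ (rmulT A a n) (rel_le_comap_rmulT B a n)

/-- The left `B`-action on `C_n(A,B)`. -/
noncomputable def lB (B : Subring A) (b : B) : ∀ n, (CC B n : Type u) →ₗ[ℤ] (CC B n : Type u)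
  | 0 => (LinearMap.mulLeft ℤ b : B →ₗ[ℤ] B)
  | n + 1 => lA B (b : A) n

/-- The right `B`-action on `C_n(A,B)`. -/
noncomputable def rB (B : Subring A) (b : B) : ∀ n, (CC B n : Type u) →ₗ[ℤ] (CC B n : Type u)
  | 0 => (LinearMap.mulRight ℤ b : B →ₗ[ℤ] B)
  | n + 1 => rA B (b : A) n

/-- `f` is a morphism of `B`-`B`-bimodules `C_m(A,B) → C_n(A,B)`. -/
def IsBBHom (B : Subring A) {m n : ℕ} (f : (CC B m : Type u) →ₗ[ℤ] (CC B n : Type u)) : Prop :=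
  ∀ b : B, (∀ x, f (lB B b m x) = lB B b n (f x)) ∧ (∀ x, f (rB B b m x) = rB B b n (f x))

/-- `f` is a morphism of `A`-`B`-bimodules `C_{m+1}(A,B) → C_{n+1}(A,B)`. -/
def IsABHom (B : Subring A) {m n : ℕ}
    (f : (CC B (m+1) : Type u) →ₗ[ℤ] (CC B (n+1) : Type u)) : Prop :=
  (∀ (a : A) x, f (lA B a m x) = lA B a n (f x)) ∧
  (∀ (b : B) x, f (rB B b (m+1) x) = rB B b (n+1) (f x))

/-- `f` is a morphism of `B`-`A`-bimodules `C_{m+1}(A,B) → C_{n+1}(A,B)`. -/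
def IsBAHom (B : Subring A) {m n : ℕ}
    (f : (CC B (m+1) : Type u) →ₗ[ℤ] (CC B (n+1) : Type u)) : Prop :=
  (∀ (b : B) x, f (lB B b (m+1) x) = lB B b (n+1) (f x)) ∧
  (∀ (a : A) x, f (rA B a m x) = rA B a n (f x))

/-- `C_m(A,B)` divides a multiple of `C_n(A,B)` as `B`-`B`-bimodules. -/
def DividesBB (B : Subring A) (m n : ℕ) : Prop :=
  ∃ (r : ℕ) (f : Fin r → ((CC B m : Type u) →ₗ[ℤ] (CC B n : Type u)))
    (g : Fin r → ((CC B n : Type u) →ₗ[ℤ] (CC B m : Type u))),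
    (∀ i, IsBBHom B (f i)) ∧ (∀ i, IsBBHom B (g i)) ∧
      ∑ i, (g i).comp (f i) = LinearMap.id

/-- `C_{m+1}(A,B)` divides a multiple of `C_{n+1}(A,B)` as `A`-`B`-bimodules. -/
def DividesAB (B : Subring A) (m n : ℕ) : Prop :=
  ∃ (r : ℕ) (f : Fin r → ((CC B (m+1) : Type u) →ₗ[ℤ] (CC B (n+1) : Type u)))
    (g : Fin r → ((CC B (n+1) : Type u) →ₗ[ℤ] (CC B (m+1) : Type u))),
    (∀ i, IsABHom B (f i)) ∧ (∀ i, IsABHom B (g i)) ∧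
      ∑ i, (g i).comp (f i) = LinearMap.id

/-- `C_{m+1}(A,B)` divides a multiple of `C_{n+1}(A,B)` as `B`-`A`-bimodules. -/
def DividesBA (B : Subring A) (m n : ℕ) : Prop :=
  ∃ (r : ℕ) (f : Fin r → ((CC B (m+1) : Type u) →ₗ[ℤ] (CC B (n+1) : Type u)))
    (g : Fin r → ((CC B (n+1) : Type u) →ₗ[ℤ] (CC B (m+1) : Type u))),
    (∀ i, IsBAHom B (f i)) ∧ (∀ i, IsBAHom B (g i)) ∧
      ∑ i, (g i).comp (f i) = LinearMap.id

/-- H-equivalence of `C_m` and `C_n` as `B`-`B`-bimodules. -/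
def HequivBB (B : Subring A) (m n : ℕ) : Prop := DividesBB B m n ∧ DividesBB B n m

/-- H-equivalence of `C_{m+1}` and `C_{n+1}` as `A`-`B`-bimodules. -/
def HequivAB (B : Subring A) (m n : ℕ) : Prop := DividesAB B m n ∧ DividesAB B n m

/-- H-equivalence of `C_{m+1}` and `C_{n+1}` as `B`-`A`-bimodules. -/
def HequivBA (B : Subring A) (m n : ℕ) : Prop := DividesBA B m n ∧ DividesBA B n m

/-- The extension `B ⊆ A` has depth `d`: depth `2n+1` (`n ≥ 0`) means
`C_{n+1} ∼ C_n` as `B`-`B`-bimodules, and right (resp. left) depth `2n` (`n ≥ 1`)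
means `C_{n+1} ∼ C_n` as `A`-`B`- (resp. `B`-`A`-) bimodules. -/
def HasDepth (B : Subring A) (d : ℕ) : Prop :=
  (∃ n : ℕ, d = 2 * n + 1 ∧ HequivBB B (n+1) n) ∨
  (∃ n : ℕ, d = 2 * (n+1) ∧ (HequivAB B (n+1) n ∨ HequivBA B (n+1) n))

/-- The minimum depth `d(B,A) ∈ ℕ∞` of the subring extension `B ⊆ A`. -/
noncomputable def depth (B : Subring A) : ℕ∞ :=
  sInf {d : ℕ∞ | ∃ m : ℕ, HasDepth B m ∧ d = (m : ℕ∞)}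

/-!
`C_{n+1}(A,B)` is a finite-dimensional `Bᵉ`-module, hence a finite direct sum of copies of the
indecomposables `M i`. Let `S m` be the set of `i` with `M i ∣ C_{m+1}`. Since `C_{m+1}` is a
direct summand of `C_{m+2}` (via `x ↦ 1 ⊗ x` and multiplication), `S 0 ⊆ S 1 ⊆ ⋯` is an increasing
chain of subsets of a set with `n_{Bᵉ}` elements, and `S 0 ≠ ∅` as soon as `A ≠ 0`. So
`S m = S (m+1)` for some `m < n_{Bᵉ}`; then every indecomposable summand of `C_{m+2}` divides
`C_{m+1}`, i.e. `C_{m+2} ∼ C_{m+1}` as `B`-`B`-bimodules, which is depth `2m+3 ≤ 2 n_{Bᵉ} + 1`.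
-/

/-- Unlike `AddMonoidHom.toIntLinearMap`, this accepts any `ℤ`-module structures; the one carried
by `ModuleCat.of ℤ X` is not syntactically `AddCommGroup.toIntModule X`. -/
def AddMonoidHom.toIntLinearMap' {M N : Type*} [AddCommGroup M] [AddCommGroup N] [Module ℤ M]
    [Module ℤ N] (f : M →+ N) : M →ₗ[ℤ] N where
  toFun := f
  map_add' := f.map_add
  map_smul' z x := by simpa using map_intCast_smul f ℤ ℤ z x

@[simp]
theorem AddMonoidHom.coe_toIntLinearMap' {M N : Type*} [AddCommGroup M] [AddCommGroup N]
    [Module ℤ M] [Module ℤ N] (f : M →+ N) : ⇑f.toIntLinearMap' = f := rfl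

section DividesMultiple

variable (R : Type*) [Ring R]

/-- `M ∣ r ⬝ N` for some `r`: `M` is a retract of `Nʳ`. -/
def DividesMultiple (M N : Type*) [AddCommGroup M] [Module R M] [AddCommGroup N] [Module R N] :
    Prop :=
  ∃ (r : ℕ) (f : Fin r → (M →ₗ[R] N)) (g : Fin r → (N →ₗ[R] M)), ∑ i, g i ∘ₗ f i = LinearMap.id

variable {R} {M N P : Type*} [AddCommGroup M] [Module R M] [AddCommGroup N] [Module R N]
  [AddCommGroup P] [Module R P]

theorem DividesMultiple.of_fintype {ι : Type*} [Fintype ι] (f : ι → (M →ₗ[R] N))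
    (g : ι → (N →ₗ[R] M)) (h : ∑ i, g i ∘ₗ f i = LinearMap.id) : DividesMultiple R M N :=
  let e := (Fintype.equivFin ι).symm
  ⟨_, fun i => f (e i), fun i => g (e i), by rwa [e.sum_comp fun i => g i ∘ₗ f i]⟩

theorem DividesMultiple.of_comp_eq_id (f : M →ₗ[R] N) (g : N →ₗ[R] M)
    (h : g ∘ₗ f = LinearMap.id) : DividesMultiple R M N :=
  ⟨1, fun _ => f, fun _ => g, by simpa using h⟩

theorem DividesMultiple.of_sum_comp_eq_id {ι : Type*} [Fintype ι] {Q : ι → Type*}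
    [∀ i, AddCommGroup (Q i)] [∀ i, Module R (Q i)] (f : ∀ i, M →ₗ[R] Q i)
    (g : ∀ i, Q i →ₗ[R] M) (hfg : ∑ i, g i ∘ₗ f i = LinearMap.id)
    (h : ∀ i, DividesMultiple R (Q i) N) : DividesMultiple R M N := by
  choose r α β hαβ using h
  have hβα : ∀ i y, ∑ t, β i t (α i t y) = y := fun i y => by
    simpa using LinearMap.congr_fun (hαβ i) y
  refine .of_fintype (ι := Σ i, Fin (r i)) (fun p => α p.1 p.2 ∘ₗ f p.1)
    (fun p => g p.1 ∘ₗ β p.1 p.2) (LinearMap.ext fun x => ?_)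
  calc (∑ p : Σ i, Fin (r i), (g p.1 ∘ₗ β p.1 p.2) ∘ₗ (α p.1 p.2 ∘ₗ f p.1)) x
      = ∑ i, g i (∑ t, β i t (α i t (f i x))) := by
        simp only [LinearMap.sum_apply, LinearMap.comp_apply, Fintype.sum_sigma, map_sum]
    _ = x := by simpa [hβα] using LinearMap.congr_fun hfg x

theorem DividesMultiple.trans (hMN : DividesMultiple R M N) (hNP : DividesMultiple R N P) :
    DividesMultiple R M P :=
  let ⟨_, f, g, hfg⟩ := hMN
  .of_sum_comp_eq_id f g hfg fun _ => hNP

end DividesMultiple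

section DirectSumDecomposition

variable (R : Type*) [Ring R] {ι : Type*} (M : ι → Type*) [∀ i, AddCommGroup (M i)]
  [∀ i, Module R (M i)]

/-- `N ≅ ⨁ j, M (σ j)` for a finite family `σ`, with inclusions `g j` and projections `f j`. -/
def IsFiniteDirectSumOf (N : Type*) [AddCommGroup N] [Module R N] : Prop :=
  ∃ (J : Type) (_ : Fintype J) (σ : J → ι) (f : ∀ j, N →ₗ[R] M (σ j))
    (g : ∀ j, M (σ j) →ₗ[R] N), (∀ j, f j ∘ₗ g j = LinearMap.id) ∧ ∑ j, g j ∘ₗ f j = LinearMap.id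

variable {R M} {N : Type*} [AddCommGroup N] [Module R N]

theorem IsFiniteDirectSumOf.of_subsingleton [Subsingleton N] : IsFiniteDirectSumOf R M N :=
  ⟨Empty, inferInstance, Empty.elim, fun j => j.elim, fun j => j.elim, fun j => j.elim,
    Subsingleton.elim _ _⟩

theorem IsFiniteDirectSumOf.of_linearEquiv (i : ι) (e : N ≃ₗ[R] M i) : IsFiniteDirectSumOf R M N :=
  ⟨Unit, inferInstance, fun _ => i, fun _ => e.toLinearMap, fun _ => e.symm.toLinearMap,
    fun _ => by ext; simp, by ext; simp⟩

theorem IsFiniteDirectSumOf.of_isCompl {p q : Submodule R N} (hpq : IsCompl p q)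
    (hp : IsFiniteDirectSumOf R M p) (hq : IsFiniteDirectSumOf R M q) :
    IsFiniteDirectSumOf R M N := by
  obtain ⟨J₁, _, σ₁, f₁, g₁, hfg₁, hsum₁⟩ := hp
  obtain ⟨J₂, _, σ₂, f₂, g₂, hfg₂, hsum₂⟩ := hq
  let π₁ := p.projectionOnto q hpq
  let π₂ := q.projectionOnto p hpq.symm
  let f : ∀ j, N →ₗ[R] M (Sum.elim σ₁ σ₂ j)
    | .inl j => f₁ j ∘ₗ π₁
    | .inr j => f₂ j ∘ₗ π₂
  let g : ∀ j, M (Sum.elim σ₁ σ₂ j) →ₗ[R] N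
    | .inl j => p.subtype ∘ₗ g₁ j
    | .inr j => q.subtype ∘ₗ g₂ j
  refine ⟨J₁ ⊕ J₂, inferInstance, Sum.elim σ₁ σ₂, f, g, ?_, ?_⟩
  · rintro (j | j) <;> refine LinearMap.ext fun x => ?_
    · show f₁ j (π₁ (g₁ j x)) = x
      rw [Submodule.projectionOnto_apply_left]; exact LinearMap.congr_fun (hfg₁ j) x
    · show f₂ j (π₂ (g₂ j x)) = x
      rw [Submodule.projectionOnto_apply_left]; exact LinearMap.congr_fun (hfg₂ j) x
  · refine LinearMap.ext fun x => ?_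
    have h₁ := LinearMap.congr_fun hsum₁ (π₁ x)
    have h₂ := LinearMap.congr_fun hsum₂ (π₂ x)
    simp only [LinearMap.sum_apply, LinearMap.comp_apply, LinearMap.id_apply] at h₁ h₂
    calc (∑ j, g j ∘ₗ f j) x
        = p.subtype (∑ j, g₁ j (f₁ j (π₁ x))) + q.subtype (∑ j, g₂ j (f₂ j (π₂ x))) := by
          simp only [Fintype.sum_sum_type, LinearMap.add_apply, LinearMap.sum_apply, map_sum]; rfl
      _ = x := by rw [h₁, h₂]; exact Submodule.projection_add_projection_eq_self hpq x

end DirectSumDecomposition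

section DirectSumDivisibility

variable {R : Type*} [Ring R] {ι : Type*} {M : ι → Type*} [∀ i, AddCommGroup (M i)]
  [∀ i, Module R (M i)] {N N' : Type*} [AddCommGroup N] [Module R N] [AddCommGroup N']
  [Module R N']

theorem IsFiniteDirectSumOf.dividesMultiple (h : IsFiniteDirectSumOf R M N)
    (hdiv : ∀ i, DividesMultiple R (M i) N → DividesMultiple R (M i) N') :
    DividesMultiple R N N' :=
  let ⟨_, _, _, f, g, hfg, hsum⟩ := h
  .of_sum_comp_eq_id f g hsum fun j => hdiv _ (.of_comp_eq_id (g j) (f j) (hfg j))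

theorem IsFiniteDirectSumOf.exists_dividesMultiple [Nontrivial N] (h : IsFiniteDirectSumOf R M N) :
    ∃ i, DividesMultiple R (M i) N := by
  obtain ⟨J, _, σ, f, g, hfg, hsum⟩ := h
  cases isEmpty_or_nonempty J with
  | inl hJ =>
    obtain ⟨x, hx⟩ := exists_ne (0 : N)
    exact absurd (by simpa using (LinearMap.congr_fun hsum x).symm) hx
  | inr hJ =>
    obtain ⟨j⟩ := hJ
    exact ⟨σ j, .of_comp_eq_id (g j) (f j) (hfg j)⟩

end DirectSumDivisibility

section Decomposition

variable {k R : Type*} [Field k] [Ring R] [Algebra k R]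

theorem Submodule.finrank_lt_of_isCompl {N : Type*} [AddCommGroup N] [Module R N] [Module k N]
    [IsScalarTower k R N] [FiniteDimensional k N] {p q : Submodule R N} (hpq : IsCompl p q)
    (hq : q ≠ ⊥) : Module.finrank k p < Module.finrank k N :=
  Submodule.finrank_lt (s := p.restrictScalars k) fun hp =>
    hq (eq_bot_of_top_isCompl ((Submodule.restrictScalars_eq_top_iff k R N).1 hp ▸ hpq))

theorem IsFiniteDirectSumOf.of_finiteDimensional {ι : Type*} {M : ι → Type*}
    [∀ i, AddCommGroup (M i)] [∀ i, Module R (M i)]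
    (hall : ∀ (N : Type u) [AddCommGroup N] [Module R N], Module.Finite R N → Nontrivial N →
      (∀ f : N →ₗ[R] N, f ∘ₗ f = f → f = 0 ∨ f = LinearMap.id) → ∃ i, Nonempty (N ≃ₗ[R] M i))
    (N : Type u) [AddCommGroup N] [Module R N] [Module k N] [IsScalarTower k R N]
    [FiniteDimensional k N] : IsFiniteDirectSumOf R M N := by
  induction hd : Module.finrank k N using Nat.strong_induction_on generalizing N with
  | _ d ih =>
  rcases subsingleton_or_nontrivial N with hN | hN
  · exact .of_subsingleton
  by_cases hind : ∀ f : N →ₗ[R] N, f ∘ₗ f = f → f = 0 ∨ f = LinearMap.id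
  · obtain ⟨i, ⟨e⟩⟩ := hall N (Module.Finite.of_restrictScalars_finite k R N) hN hind
    exact .of_linearEquiv i e
  push Not at hind
  obtain ⟨e, he, he0, he1⟩ := hind
  have hpq := LinearMap.IsIdempotentElem.isCompl (he : IsIdempotentElem e)
  have hker : LinearMap.ker e ≠ ⊥ := fun h =>
    he1 (LinearMap.ext fun x => LinearMap.ker_eq_bot.1 h (LinearMap.congr_fun he x))
  have hrange : LinearMap.range e ≠ ⊥ := fun h => he0 (LinearMap.range_eq_bot.1 h)
  have (p : Submodule R N) : FiniteDimensional k p :=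
    FiniteDimensional.finiteDimensional_submodule (p.restrictScalars k)
  exact .of_isCompl hpq (ih _ (hd ▸ Submodule.finrank_lt_of_isCompl hpq hker) _ rfl)
    (ih _ (hd ▸ Submodule.finrank_lt_of_isCompl hpq.symm hrange) _ rfl)

end Decomposition

theorem Finset.exists_lt_card_eq_succ_of_monotone {ι : Type*} [Fintype ι] {S : ℕ → Finset ι}
    (hS : Monotone S) (h0 : (S 0).Nonempty) : ∃ m < Fintype.card ι, S m = S (m+1) := by
  by_contra! hne
  have hcard : ∀ m ≤ Fintype.card ι, m + 1 ≤ (S m).card := by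
    intro m hm
    induction m with
    | zero => exact h0.card_pos
    | succ m ih =>
      exact (ih (by omega)).trans_lt
        (Finset.card_lt_card ((hS m.le_succ).lt_of_ne (hne m (by omega))))
  exact absurd ((hcard _ le_rfl).trans (Finset.card_le_univ _)) (by omega)

section TensorPowerActions

theorem lmulT_zero : ∀ n, lmulT A 0 n = 0
  | 0 => LinearMap.mulLeft_zero_eq_zero ℤ A
  | n + 1 => by
    show LinearMap.rTensor _ (LinearMap.mulLeft ℤ (0 : A)) = 0
    rw [LinearMap.mulLeft_zero_eq_zero, LinearMap.rTensor_zero]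

theorem lmulT_one : ∀ n, lmulT A 1 n = LinearMap.id
  | 0 => LinearMap.mulLeft_one ℤ A
  | n + 1 => by
    show LinearMap.rTensor _ (LinearMap.mulLeft ℤ (1 : A)) = LinearMap.id
    rw [LinearMap.mulLeft_one, LinearMap.rTensor_id]

theorem lmulT_mul (a b : A) : ∀ n, lmulT A (a * b) n = lmulT A a n ∘ₗ lmulT A b n
  | 0 => LinearMap.mulLeft_mul ℤ A a b
  | n + 1 => by
    show LinearMap.rTensor _ (LinearMap.mulLeft ℤ (a * b)) = _
    rw [LinearMap.mulLeft_mul, LinearMap.rTensor_comp]; rfl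

theorem lmulT_add (a b : A) : ∀ n, lmulT A (a + b) n = lmulT A a n + lmulT A b n
  | 0 => LinearMap.ext fun x => add_mul a b x
  | n + 1 => by
    show LinearMap.rTensor _ (LinearMap.mulLeft ℤ (a + b)) = _
    rw [show LinearMap.mulLeft ℤ (a + b) = LinearMap.mulLeft ℤ a + LinearMap.mulLeft ℤ b from
      LinearMap.ext fun x => add_mul a b x, LinearMap.rTensor_add]; rfl

theorem rmulT_zero : ∀ n, rmulT A 0 n = 0
  | 0 => LinearMap.ext fun (x : A) => mul_zero x
  | n + 1 => by
    show LinearMap.lTensor A (rmulT A 0 n) = 0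
    rw [rmulT_zero n, LinearMap.lTensor_zero]

theorem rmulT_one : ∀ n, rmulT A 1 n = LinearMap.id
  | 0 => LinearMap.ext fun (x : A) => mul_one x
  | n + 1 => by
    show LinearMap.lTensor A (rmulT A 1 n) = LinearMap.id
    rw [rmulT_one n, LinearMap.lTensor_id]

theorem rmulT_mul (a b : A) : ∀ n, rmulT A (a * b) n = rmulT A b n ∘ₗ rmulT A a n
  | 0 => LinearMap.ext fun (x : A) => (mul_assoc x a b).symm
  | n + 1 => by
    show LinearMap.lTensor A (rmulT A (a * b) n) = _
    rw [rmulT_mul a b n, LinearMap.lTensor_comp]; rfl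

theorem rmulT_add (a b : A) : ∀ n, rmulT A (a + b) n = rmulT A a n + rmulT A b n
  | 0 => LinearMap.ext fun (x : A) => mul_add x a b
  | n + 1 => by
    show LinearMap.lTensor A (rmulT A (a + b) n) = _
    rw [rmulT_add a b n, LinearMap.lTensor_add]; rfl

end TensorPowerActions

namespace Tpow

variable {n : ℕ}

/-- `a ⊗ₜ t`, typed in `Tpow A (n+1)` rather than in `A ⊗[ℤ] Tpow A n`, so that rewriting
inside `Tpow A (n+1)` sees its own instances. -/
noncomputable def tmul (a : A) (t : (Tpow A n : Type u)) : (Tpow A (n+1) : Type u) :=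
  a ⊗ₜ[ℤ] t

theorem induction_on {P : (Tpow A (n+1) : Type u) → Prop} (x : (Tpow A (n+1) : Type u))
    (zero : P 0) (tmul : ∀ a t, P (tmul a t)) (add : ∀ x y, P x → P y → P (x + y)) : P x :=
  TensorProduct.induction_on x zero tmul add

theorem tmul_sub (a : A) (t t' : (Tpow A n : Type u)) : tmul a (t - t') = tmul a t - tmul a t' :=
  TensorProduct.tmul_sub a t t'

theorem lmulT_tmul (a c : A) (t : (Tpow A n : Type u)) :
    lmulT A a (n+1) (tmul c t) = tmul (a * c) t := rfl

theorem rmulT_tmul (a c : A) (t : (Tpow A n : Type u)) :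
    rmulT A a (n+1) (tmul c t) = tmul c (rmulT A a n t) := rfl

variable (B : Subring A)

theorem tmul_mul_sub_tmul_mem_rel (a : A) (b : B) (t : (Tpow A n : Type u)) :
    tmul (a * b) t - tmul a (lmulT A b n t) ∈ rel B (n+1) :=
  Submodule.subset_span (Or.inl ⟨a, b, t, rfl⟩)

theorem tmul_mem_rel (a : A) {r : (Tpow A n : Type u)} (hr : r ∈ rel B n) :
    tmul a r ∈ rel B (n+1) :=
  Submodule.subset_span (Or.inr ⟨a, r, hr, rfl⟩)

theorem rel_succ_le {p : Submodule ℤ (Tpow A (n+1) : Type u)}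
    (hgen : ∀ (a : A) (b : B) t, tmul (a * b) t - tmul a (lmulT A b n t) ∈ p)
    (hrel : ∀ (a : A) r, r ∈ rel B n → tmul a r ∈ p) : rel B (n+1) ≤ p := by
  rw [rel_succ, Submodule.span_le]
  rintro _ (⟨a, b, t, rfl⟩ | ⟨a, r, hr, rfl⟩)
  exacts [hgen a b t, hrel a r hr]

end Tpow

theorem lmulT_sub_rmulT_mem_rel (B : Subring A) {b : A} (hbB : b ∈ B) (hb : ∀ a : A, Commute b a) :
    ∀ n (t : (Tpow A n : Type u)), lmulT A b n t - rmulT A b n t ∈ rel B n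
  | 0, (t : A) => by
    rw [show lmulT A b 0 t - rmulT A b 0 t = 0 from sub_eq_zero.2 (hb t).eq]
    exact zero_mem _
  | n + 1, t => by
    induction t using Tpow.induction_on with
    | zero => simp
    | tmul a s =>
      have key : lmulT A b (n+1) (Tpow.tmul a s) - rmulT A b (n+1) (Tpow.tmul a s) =
          (Tpow.tmul (a * b) s - Tpow.tmul a (lmulT A b n s)) +
            Tpow.tmul a (lmulT A b n s - rmulT A b n s) := by
        rw [Tpow.lmulT_tmul, Tpow.rmulT_tmul, Tpow.tmul_sub, (hb a).eq]; abel
      rw [key]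
      exact add_mem (Tpow.tmul_mul_sub_tmul_mem_rel B a ⟨b, hbB⟩ s)
        (Tpow.tmul_mem_rel B a (lmulT_sub_rmulT_mem_rel B hbB hb n s))
    | add x y hx hy => rw [map_add, map_add, add_sub_add_comm]; exact add_mem hx hy

section QuotientActions

variable (B : Subring A)

noncomputable def CC.mk (n : ℕ) : (Tpow A n : Type u) →ₗ[ℤ] (CC B (n+1) : Type u) :=
  (rel B n).mkQ

theorem CC.mk_surjective (n : ℕ) : Function.Surjective (CC.mk B n) :=
  Submodule.mkQ_surjective _

variable {B} in
theorem CC.linearMap_ext {n : ℕ} {X : Type*} [AddCommGroup X] [Module ℤ X]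
    {f g : (CC B (n+1) : Type u) →ₗ[ℤ] X} (h : ∀ t, f (CC.mk B n t) = g (CC.mk B n t)) :
    f = g :=
  Submodule.linearMap_qext _ (LinearMap.ext h)

theorem lA_mk (a : A) (n : ℕ) (t : (Tpow A n : Type u)) :
    lA B a n (CC.mk B n t) = CC.mk B n (lmulT A a n t) := rfl

theorem rA_mk (a : A) (n : ℕ) (t : (Tpow A n : Type u)) :
    rA B a n (CC.mk B n t) = CC.mk B n (rmulT A a n t) := rfl

theorem lA_mul (a a' : A) (n : ℕ) (x : (CC B (n+1) : Type u)) :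
    lA B (a * a') n x = lA B a n (lA B a' n x) := by
  obtain ⟨t, rfl⟩ := CC.mk_surjective B n x
  simp only [lA_mk, lmulT_mul, LinearMap.comp_apply]

theorem rA_mul (a a' : A) (n : ℕ) (x : (CC B (n+1) : Type u)) :
    rA B (a * a') n x = rA B a' n (rA B a n x) := by
  obtain ⟨t, rfl⟩ := CC.mk_surjective B n x
  simp only [rA_mk, rmulT_mul, LinearMap.comp_apply]

noncomputable def lARingHom (n : ℕ) : A →+* Module.End ℤ (CC B (n+1) : Type u) where
  toFun a := lA B a n
  map_one' := CC.linearMap_ext fun t => by simp [lA_mk, lmulT_one]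
  map_mul' a a' := LinearMap.ext (lA_mul B a a' n)
  map_zero' := CC.linearMap_ext fun t => by simp [lA_mk, lmulT_zero]
  map_add' a a' := CC.linearMap_ext fun t => by simp [lA_mk, lmulT_add]

noncomputable def rARingHom (n : ℕ) : Aᵐᵒᵖ →+* Module.End ℤ (CC B (n+1) : Type u) where
  toFun a := rA B a.unop n
  map_one' := CC.linearMap_ext fun t => by simp [rA_mk, rmulT_one]
  map_mul' a a' := LinearMap.ext (rA_mul B a'.unop a.unop n)
  map_zero' := CC.linearMap_ext fun t => by simp [rA_mk, rmulT_zero]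
  map_add' a a' := CC.linearMap_ext fun t => by simp [rA_mk, rmulT_add]

theorem lA_rA_comm (a a' : A) (n : ℕ) (x : (CC B (n+1) : Type u)) :
    lA B a n (rA B a' n x) = rA B a' n (lA B a n x) := by
  obtain ⟨t, rfl⟩ := CC.mk_surjective B n x
  simp only [lA_mk, rA_mk, lmulT_rmulT_comm]

theorem lA_eq_rA_of_commute (n : ℕ) {b : A} (hbB : b ∈ B) (hb : ∀ a : A, Commute b a) :
    lA B b n = rA B b n :=
  CC.linearMap_ext fun t => (Submodule.Quotient.eq _).2 (lmulT_sub_rmulT_mem_rel B hbB hb n t)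

noncomputable instance (n : ℕ) : Module A (CC B (n+1) : Type u) := Module.compHom _ (lARingHom B n)

theorem CC.smul_def {n : ℕ} (a : A) (x : (CC B (n+1) : Type u)) : a • x = lA B a n x := rfl

end QuotientActions

section EnvelopingAlgebra

variable {k : Type*} [CommRing k] [Algebra k A] (B : Subalgebra k A) (n : ℕ)

noncomputable instance : Module k (CC B.toSubring (n+1) : Type u) :=
  Module.compHom _ (algebraMap k A)

instance : IsScalarTower k A (CC B.toSubring (n+1) : Type u) :=
  ⟨fun c a x => by
    show (c • a) • x = algebraMap k A c • a • x
    rw [Algebra.smul_def, mul_smul]⟩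

noncomputable instance : Module (↥B)ᵐᵒᵖ (CC B.toSubring (n+1) : Type u) :=
  Module.compHom _ ((rARingHom B.toSubring n).comp (RingHom.op (B.val : ↥B →+* A)))

theorem CC.op_smul_def (b : (↥B)ᵐᵒᵖ) (x : (CC B.toSubring (n+1) : Type u)) :
    b • x = rA B.toSubring (b.unop : A) n x := rfl

theorem CC.algebraMap_smul (c : k) (x : (CC B.toSubring (n+1) : Type u)) :
    c • x = lA B.toSubring (algebraMap k A c) n x := rfl

instance : SMulCommClass ↥B (↥B)ᵐᵒᵖ (CC B.toSubring (n+1) : Type u) :=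
  ⟨fun b b' x => lA_rA_comm B.toSubring b (b'.unop : A) n x⟩

-- `k` acts through `B` and is central, so acting on the left or on the right is the same.
instance : IsScalarTower k (↥B)ᵐᵒᵖ (CC B.toSubring (n+1) : Type u) :=
  ⟨fun c b x => by
    rw [CC.op_smul_def, CC.op_smul_def, CC.algebraMap_smul,
      lA_eq_rA_of_commute B.toSubring n (B.algebraMap_mem c) (Algebra.commutes c),
      MulOpposite.unop_smul, Subalgebra.coe_smul, Algebra.smul_def, Algebra.commutes, rA_mul]⟩

noncomputable instance : Module (↥B ⊗[k] (↥B)ᵐᵒᵖ) (CC B.toSubring (n+1) : Type u) :=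
  TensorProduct.Algebra.module

instance : IsScalarTower k (↥B ⊗[k] (↥B)ᵐᵒᵖ) (CC B.toSubring (n+1) : Type u) :=
  ⟨fun c x m => by
    show TensorProduct.Algebra.moduleAux (c • x) m = c • TensorProduct.Algebra.moduleAux x m
    rw [map_smul, LinearMap.smul_apply]⟩

theorem CC.tmul_smul (b : B) (b' : (↥B)ᵐᵒᵖ) (x : (CC B.toSubring (n+1) : Type u)) :
    (b ⊗ₜ[k] b') • x = lA B.toSubring b n (rA B.toSubring (b'.unop : A) n x) := rfl

end EnvelopingAlgebra

section UnitAndMultiplication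

variable (B : Subring A)

noncomputable def Tpow.mulMap (n : ℕ) : (Tpow A (n+1) : Type u) →ₗ[ℤ] (Tpow A n : Type u) :=
  TensorProduct.lift (LinearMap.mk₂ ℤ (fun a t => lmulT A a n t)
    (fun a a' t => by rw [lmulT_add, LinearMap.add_apply])
    (fun z a t => (map_zsmul (AddMonoidHom.mk' (fun a => lmulT A a n t)
      (fun a a' => by rw [lmulT_add, LinearMap.add_apply])) z a).trans
        (int_smul_eq_zsmul _ z _).symm)
    (fun a t t' => map_add _ t t')
    (fun z a t => (lmulT A a n).map_smul z t))

theorem Tpow.mulMap_tmul (n : ℕ) (a : A) (t : (Tpow A n : Type u)) :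
    Tpow.mulMap n (Tpow.tmul a t) = lmulT A a n t := rfl

noncomputable def Tpow.oneTmul (n : ℕ) : (Tpow A n : Type u) →ₗ[ℤ] (Tpow A (n+1) : Type u) :=
  TensorProduct.mk ℤ A (Tpow A n : Type u) 1

theorem Tpow.oneTmul_apply (n : ℕ) (t : (Tpow A n : Type u)) :
    Tpow.oneTmul n t = Tpow.tmul 1 t := rfl

theorem rel_le_comap_mulMap (n : ℕ) : rel B (n+1) ≤ (rel B n).comap (Tpow.mulMap n) :=
  Tpow.rel_succ_le B
    (fun a b t => by
      rw [Submodule.mem_comap, map_sub, Tpow.mulMap_tmul, Tpow.mulMap_tmul, lmulT_mul,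
        LinearMap.comp_apply, sub_self]
      exact zero_mem _)
    (fun a _ hr => rel_le_comap_lmulT B a n hr)

theorem rel_le_comap_oneTmul (n : ℕ) : rel B n ≤ (rel B (n+1)).comap (Tpow.oneTmul n) :=
  fun _ hr => Tpow.tmul_mem_rel B 1 hr

noncomputable def CC.unitMap (n : ℕ) : (CC B (n+1) : Type u) →ₗ[ℤ] (CC B (n+2) : Type u) :=
  Submodule.mapQ _ _ (Tpow.oneTmul n) (rel_le_comap_oneTmul B n)

noncomputable def CC.mulMap (n : ℕ) : (CC B (n+2) : Type u) →ₗ[ℤ] (CC B (n+1) : Type u) :=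
  Submodule.mapQ _ _ (Tpow.mulMap n) (rel_le_comap_mulMap B n)

theorem CC.unitMap_mk (n : ℕ) (t : (Tpow A n : Type u)) :
    CC.unitMap B n (CC.mk B n t) = CC.mk B (n+1) (Tpow.tmul 1 t) := rfl

theorem CC.mulMap_mk (n : ℕ) (t : (Tpow A (n+1) : Type u)) :
    CC.mulMap B n (CC.mk B (n+1) t) = CC.mk B n (Tpow.mulMap n t) := rfl

theorem CC.mulMap_unitMap (n : ℕ) (x : (CC B (n+1) : Type u)) :
    CC.mulMap B n (CC.unitMap B n x) = x := by
  obtain ⟨t, rfl⟩ := CC.mk_surjective B n x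
  rw [CC.unitMap_mk, CC.mulMap_mk, Tpow.mulMap_tmul, lmulT_one, LinearMap.id_apply]

theorem CC.unitMap_lA (n : ℕ) (b : B) (x : (CC B (n+1) : Type u)) :
    CC.unitMap B n (lA B b n x) = lA B b (n+1) (CC.unitMap B n x) := by
  obtain ⟨t, rfl⟩ := CC.mk_surjective B n x
  refine ((Submodule.Quotient.eq _).2 ?_).symm
  simpa only [Tpow.oneTmul_apply, Tpow.lmulT_tmul, mul_one, one_mul] using
    Tpow.tmul_mul_sub_tmul_mem_rel B 1 b t

theorem CC.unitMap_rA (n : ℕ) (a : A) (x : (CC B (n+1) : Type u)) :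
    CC.unitMap B n (rA B a n x) = rA B a (n+1) (CC.unitMap B n x) := by
  obtain ⟨t, rfl⟩ := CC.mk_surjective B n x
  rfl

theorem CC.mulMap_lA (n : ℕ) (a : A) (x : (CC B (n+2) : Type u)) :
    CC.mulMap B n (lA B a (n+1) x) = lA B a n (CC.mulMap B n x) := by
  obtain ⟨t, rfl⟩ := CC.mk_surjective B (n+1) x
  refine congrArg (CC.mk B n) ?_
  induction t using Tpow.induction_on with
  | zero => simp only [map_zero]
  | tmul c s => exact LinearMap.congr_fun (lmulT_mul a c n) s
  | add y z hy hz => simp only [map_add, hy, hz]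

theorem CC.mulMap_rA (n : ℕ) (a : A) (x : (CC B (n+2) : Type u)) :
    CC.mulMap B n (rA B a (n+1) x) = rA B a n (CC.mulMap B n x) := by
  obtain ⟨t, rfl⟩ := CC.mk_surjective B (n+1) x
  refine congrArg (CC.mk B n) ?_
  induction t using Tpow.induction_on with
  | zero => simp only [map_zero]
  | tmul c s => exact lmulT_rmulT_comm A c a n s
  | add y z hy hz => simp only [map_add, hy, hz]

theorem isBBHom_unitMap (n : ℕ) : IsBBHom B (CC.unitMap B n) :=
  fun b => ⟨CC.unitMap_lA B n b, CC.unitMap_rA B n b⟩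

theorem isBBHom_mulMap (n : ℕ) : IsBBHom B (CC.mulMap B n) :=
  fun b => ⟨CC.mulMap_lA B n b, CC.mulMap_rA B n b⟩

end UnitAndMultiplication

section BimoduleMaps

variable {k : Type*} [CommRing k] [Algebra k A] (B : Subalgebra k A)

theorem CC.lA_eq_smul {n : ℕ} (b : B) (x : (CC B.toSubring (n+1) : Type u)) :
    lA B.toSubring b n x = (b ⊗ₜ[k] (1 : (↥B)ᵐᵒᵖ)) • x := by
  rw [CC.tmul_smul]
  obtain ⟨t, rfl⟩ := CC.mk_surjective B.toSubring n x
  simp only [rA_mk, MulOpposite.unop_one, OneMemClass.coe_one, rmulT_one, LinearMap.id_apply]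

theorem CC.rA_eq_smul {n : ℕ} (b : B) (x : (CC B.toSubring (n+1) : Type u)) :
    rA B.toSubring b n x = ((1 : B) ⊗ₜ[k] MulOpposite.op b) • x := by
  rw [CC.tmul_smul]
  obtain ⟨t, rfl⟩ := CC.mk_surjective B.toSubring n x
  simp only [rA_mk, lA_mk, MulOpposite.unop_op, OneMemClass.coe_one, lmulT_one, LinearMap.id_apply]

theorem isBBHom_of_linearMap {m n : ℕ} (F : (CC B.toSubring (m+1) : Type u) →ₗ[↥B ⊗[k] (↥B)ᵐᵒᵖ]
    (CC B.toSubring (n+1) : Type u)) : IsBBHom B.toSubring F.toAddMonoidHom.toIntLinearMap' :=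
  fun b => ⟨fun x => by
    show F (lA B.toSubring b m x) = lA B.toSubring b n (F x)
    rw [CC.lA_eq_smul, CC.lA_eq_smul, map_smul], fun x => by
    show F (rA B.toSubring b m x) = rA B.toSubring b n (F x)
    rw [CC.rA_eq_smul, CC.rA_eq_smul, map_smul]⟩

variable {B} in
noncomputable def IsBBHom.toLinearMap {m n : ℕ}
    {f : (CC B.toSubring (m+1) : Type u) →ₗ[ℤ] (CC B.toSubring (n+1) : Type u)}
    (hf : IsBBHom B.toSubring f) :
    (CC B.toSubring (m+1) : Type u) →ₗ[↥B ⊗[k] (↥B)ᵐᵒᵖ] (CC B.toSubring (n+1) : Type u) where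
  toFun := f
  map_add' := f.map_add
  map_smul' y x := by
    rw [RingHom.id_apply]
    induction y using TensorProduct.induction_on with
    | zero =>
      exact (congrArg f (zero_smul (↥B ⊗[k] (↥B)ᵐᵒᵖ) x)).trans
        ((map_zero f).trans (zero_smul (↥B ⊗[k] (↥B)ᵐᵒᵖ) (f x)).symm)
    | tmul b b' =>
      rw [CC.tmul_smul, CC.tmul_smul]
      exact ((hf b).1 _).trans (congrArg _ ((hf b'.unop).2 x))
    | add y y' hy hy' => rw [add_smul, add_smul, map_add, hy, hy']

theorem CC.dividesMultiple_succ (n : ℕ) :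
    DividesMultiple (↥B ⊗[k] (↥B)ᵐᵒᵖ) (CC B.toSubring (n+1) : Type u)
      (CC B.toSubring (n+2) : Type u) :=
  .of_comp_eq_id (isBBHom_unitMap B.toSubring n).toLinearMap
    (isBBHom_mulMap B.toSubring n).toLinearMap (LinearMap.ext (CC.mulMap_unitMap B.toSubring n))

theorem dividesBB_of_dividesMultiple {m n : ℕ}
    (h : DividesMultiple (↥B ⊗[k] (↥B)ᵐᵒᵖ) (CC B.toSubring (m+1) : Type u)
      (CC B.toSubring (n+1) : Type u)) :
    DividesBB B.toSubring (m+1) (n+1) :=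
  let ⟨r, f, g, hfg⟩ := h
  ⟨r, fun i => (f i).toAddMonoidHom.toIntLinearMap', fun i => (g i).toAddMonoidHom.toIntLinearMap',
    fun i => isBBHom_of_linearMap B (f i), fun i => isBBHom_of_linearMap B (g i),
    LinearMap.ext fun x => by simpa using LinearMap.congr_fun hfg x⟩

end BimoduleMaps

section Finiteness

theorem CC.span_range_unitMap (B : Subring A) (n : ℕ) :
    Submodule.span A (Set.range (CC.unitMap B n)) = ⊤ := by
  rw [eq_top_iff]
  rintro x -
  obtain ⟨t, rfl⟩ := CC.mk_surjective B (n+1) x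
  induction t using Tpow.induction_on with
  | zero => rw [map_zero]; exact zero_mem _
  | tmul a s =>
    have h : CC.mk B (n+1) (Tpow.tmul a s) = a • CC.unitMap B n (CC.mk B n s) := by
      rw [CC.unitMap_mk, CC.smul_def, lA_mk, Tpow.lmulT_tmul, mul_one]
    rw [h]
    exact Submodule.smul_mem _ a (Submodule.subset_span ⟨_, rfl⟩)
  | add y z hy hz => rw [map_add]; exact add_mem hy hz

variable {k : Type*} [Field k] [Algebra k A] [FiniteDimensional k A] (B : Subalgebra k A)

theorem CC.finiteDimensional : ∀ n, FiniteDimensional k (CC B.toSubring (n+1) : Type u)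
  | 0 => by
    have : Module.Finite A (CC B.toSubring 1 : Type u) :=
      Module.Finite.of_surjective (LinearMap.toSpanSingleton A _ (CC.mk B.toSubring 0 (1 : A)))
        fun x => by
          obtain ⟨a, rfl⟩ := CC.mk_surjective B.toSubring 0 x
          exact ⟨a, congrArg (CC.mk B.toSubring 0) (mul_one (M := A) a)⟩
    exact Module.Finite.trans A _
  | n + 1 => by
    have := CC.finiteDimensional n
    let u := ((isBBHom_unitMap B.toSubring n).toLinearMap (k := k)).restrictScalars k
    obtain ⟨s, hs⟩ := Module.Finite.fg_top (R := k) (M := (CC B.toSubring (n+1) : Type u))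
    have : Module.Finite A (CC B.toSubring (n+2) : Type u) := by
      classical
      refine ⟨⟨s.image u, eq_top_iff.2 ?_⟩⟩
      rw [Finset.coe_image, ← CC.span_range_unitMap, Submodule.span_le]
      rintro _ ⟨x, rfl⟩
      have hx : u x ∈ Submodule.span k (u '' s) := by
        rw [← Submodule.map_span, hs, Submodule.map_top]; exact LinearMap.mem_range_self u x
      exact Submodule.span_le_restrictScalars k A _ hx
    exact Module.Finite.trans A _

end Finiteness

section Depth

variable (B : Subring A)

theorem depth_le_of_hasDepth {d : ℕ} (h : HasDepth B d) : depth B ≤ d :=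
  sInf_le ⟨d, h, rfl⟩

theorem dividesBB_of_subsingleton {m n : ℕ} [Subsingleton (CC B m : Type u)] :
    DividesBB B m n :=
  ⟨0, Fin.elim0, Fin.elim0, fun i => i.elim0, fun i => i.elim0, Subsingleton.elim _ _⟩

theorem hasDepth_one_of_subsingleton [Subsingleton A] : HasDepth B 1 := by
  have : Subsingleton (CC B 0 : Type u) := inferInstanceAs (Subsingleton B)
  have : Subsingleton (Tpow A 0 : Type u) := inferInstanceAs (Subsingleton A)
  have : Subsingleton (CC B 1 : Type u) := (CC.mk_surjective B 0).subsingleton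
  exact Or.inl ⟨0, rfl, dividesBB_of_subsingleton B, dividesBB_of_subsingleton B⟩

theorem CC.nontrivial_one [Nontrivial A] : Nontrivial (CC B 1 : Type u) :=
  have : Nontrivial (Tpow A 0 : Type u) := inferInstanceAs (Nontrivial A)
  Function.Injective.nontrivial (f := CC.mk B 0) fun _ _ h =>
    sub_eq_zero.1 ((Submodule.mem_bot ℤ).1 ((Submodule.Quotient.eq _).1 h))

end Depth

section DepthBound

variable {k : Type*} [CommRing k] [Algebra k A] [Nontrivial A] (B : Subalgebra k A) {ι : Type*}
  [Fintype ι] {M : ι → Type*} [∀ i, AddCommGroup (M i)] [∀ i, Module (↥B ⊗[k] (↥B)ᵐᵒᵖ) (M i)]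

theorem depth_le_of_forall_isFiniteDirectSumOf
    (hdec : ∀ m, IsFiniteDirectSumOf (↥B ⊗[k] (↥B)ᵐᵒᵖ) M (CC B.toSubring (m+1) : Type u)) :
    depth B.toSubring ≤ (1 + 2 * Fintype.card ι : ℕ∞) := by
  classical
  let S (m : ℕ) : Finset ι :=
    {i | DividesMultiple (↥B ⊗[k] (↥B)ᵐᵒᵖ) (M i) (CC B.toSubring (m+1) : Type u)}
  have hS : Monotone S := monotone_nat_of_le_succ fun m i hi => by
    simp only [S, Finset.mem_filter, Finset.mem_univ, true_and] at hi ⊢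
    exact hi.trans (CC.dividesMultiple_succ B m)
  have hS0 : (S 0).Nonempty := by
    have := CC.nontrivial_one B.toSubring
    have hdec0 : IsFiniteDirectSumOf _ M (CC B.toSubring 1 : Type u) := hdec 0
    obtain ⟨i, hi⟩ := hdec0.exists_dividesMultiple
    exact ⟨i, by simpa [S] using hi⟩
  obtain ⟨m, hm, hSm⟩ := Finset.exists_lt_card_eq_succ_of_monotone hS hS0
  have hdiv := (hdec (m+1)).dividesMultiple (N' := (CC B.toSubring (m+1) : Type u)) fun i hi => by
    have : i ∈ S m := hSm ▸ by simpa [S] using hi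
    simpa [S] using this
  have hdepth : HasDepth B.toSubring (2 * (m+1) + 1) :=
    Or.inl ⟨m+1, rfl, dividesBB_of_dividesMultiple B hdiv,
      dividesBB_of_dividesMultiple B (CC.dividesMultiple_succ B m)⟩
  refine (depth_le_of_hasDepth _ hdepth).trans ?_
  exact_mod_cast (by omega : 2 * (m+1) + 1 ≤ 1 + 2 * Fintype.card ι)

end DepthBound

open scoped TensorProduct in
theorem depth_le_of_finite_rep_type_of_env_general
    (k : Type u) [Field k] (A : Type u) [Ring A] [Algebra k A] [FiniteDimensional k A]
    (B : Subalgebra k A) (nBe : ℕ)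
    (M : Fin nBe → Type u)
    [∀ i, AddCommGroup (M i)] [∀ i, Module (↥B ⊗[k] (↥B)ᵐᵒᵖ) (M i)]
    (hall : ∀ (N : Type u) [AddCommGroup N] [Module (↥B ⊗[k] (↥B)ᵐᵒᵖ) N],
      Module.Finite (↥B ⊗[k] (↥B)ᵐᵒᵖ) N → Nontrivial N →
      (∀ f : N →ₗ[↥B ⊗[k] (↥B)ᵐᵒᵖ] N, f ∘ₗ f = f → f = 0 ∨ f = LinearMap.id) →
      ∃ i, Nonempty (N ≃ₗ[↥B ⊗[k] (↥B)ᵐᵒᵖ] M i)) :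
    depth B.toSubring ≤ (1 + 2 * nBe : ℕ∞) := by
  rcases subsingleton_or_nontrivial A with hA | hA
  · exact (depth_le_of_hasDepth _ (hasDepth_one_of_subsingleton _)).trans (by simp)
  have hdec (m : ℕ) : IsFiniteDirectSumOf _ M (CC B.toSubring (m+1) : Type u) :=
    have := CC.finiteDimensional B m
    .of_finiteDimensional (k := k) hall _
  simpa using depth_le_of_forall_isFiniteDirectSumOf B hdec

open scoped TensorProduct in
/-- If `B ⊆ A` are finite-dimensional `k`-algebras and the enveloping
algebra `B^e = B ⊗[k] Bᵐᵒᵖ` has finite representation type, with exactly `nBe`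
isomorphism classes of finitely generated indecomposable modules (represented by the
family `M`), then `d(B,A) ≤ 1 + 2 ⬝ nBe`. -/
theorem depth_le_of_finite_rep_type_of_env
    (k : Type u) [Field k] (A : Type u) [Ring A] [Algebra k A] [FiniteDimensional k A]
    (B : Subalgebra k A) (nBe : ℕ)
    (M : Fin nBe → Type u)
    [∀ i, AddCommGroup (M i)] [∀ i, Module (↥B ⊗[k] (↥B)ᵐᵒᵖ) (M i)]
    (hfg : ∀ i, Module.Finite (↥B ⊗[k] (↥B)ᵐᵒᵖ) (M i))
    (hnontriv : ∀ i, Nontrivial (M i))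
    (hindec : ∀ i (f : M i →ₗ[↥B ⊗[k] (↥B)ᵐᵒᵖ] M i), f ∘ₗ f = f → f = 0 ∨ f = LinearMap.id)
    (hpairwise : ∀ i j, i ≠ j → IsEmpty (M i ≃ₗ[↥B ⊗[k] (↥B)ᵐᵒᵖ] M j))
    (hall : ∀ (N : Type u) [AddCommGroup N] [Module (↥B ⊗[k] (↥B)ᵐᵒᵖ) N],
      Module.Finite (↥B ⊗[k] (↥B)ᵐᵒᵖ) N → Nontrivial N →
      (∀ f : N →ₗ[↥B ⊗[k] (↥B)ᵐᵒᵖ] N, f ∘ₗ f = f → f = 0 ∨ f = LinearMap.id) →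
      ∃ i, Nonempty (N ≃ₗ[↥B ⊗[k] (↥B)ᵐᵒᵖ] M i)) :
    depth B.toSubring ≤ (1 + 2 * nBe : ℕ∞) :=
  depth_le_of_finite_rep_type_of_env_general k A B nBe M hall
end

section
/- Let K be an algebraically closed field, Q a finite connected acyclic quiver, A = KQ its path algebra, and B = K·1_A + rad A the primary arrow subalgebra (the span of the identity together with all paths of length ≥ 1). Then A is indecomposable as a B-B-bimodule; indeed the endomorphism ring End(_B A _B) is a local ring. -/
universe u

/-- `f` is an endomorphism of `A` as a `B`-`B`-bimodule, for a subalgebra `B ⊆ A`: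
an additive endomorphism commuting with left and right multiplication by `B`. -/
def IsBimoduleEndo {K : Type u} [Field K] {A : Type u} [Ring A] [Algebra K A]
    (B : Subalgebra K A) (f : AddMonoid.End A) : Prop :=
  ∀ b ∈ B, ∀ x : A, f (b * x) = b * f x ∧ f (x * b) = f x * b

/-! A bimodule endomorphism `f` commutes with multiplication by every path of positive length,
so `f p = p * f 1 = f 1 * p` for such `p`. Comparing the coefficients of an arrow `a ⟶ b` on both
sides shows that the coefficients of the trivial paths `e_a`, `e_b` in `f 1` agree, so by
connectedness they are one scalar `c`. Then `g = f - c` maps each path `p` into the span of the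
paths longer than `p` (for trivial paths `e_i` this uses an arrow at each other vertex `a` to kill
the `e_a`-coefficient of `g e_i`), and `g` is nilpotent because paths in an acyclic quiver are no
longer than the number of vertices. A scalar plus a commuting nilpotent is a unit or `1` minus a
unit, and an idempotent of this form is `0` or `1`. -/

namespace Quiver

variable {V : Type*} [Quiver V]

lemma apply_eq_apply_of_forall_hom [Subsingleton (WeaklyConnectedComponent V)] {α : Sort*}
    (P : V → α) (hP : ∀ a b : V, (a ⟶ b) → P a = P b) (a b : V) : P a = P b := by
  obtain ⟨p⟩ := (WeaklyConnectedComponent.eq a b).1 (Subsingleton.elim _ _)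
  induction p with
  | nil => rfl
  | cons _ e ih => exact ih.trans (e.elim (hP _ _) fun e => (hP _ _ e).symm)

lemma exists_hom_of_ne [Subsingleton (WeaklyConnectedComponent V)] {a b : V} (hab : a ≠ b) :
    (∃ c, Nonempty (c ⟶ b)) ∨ ∃ c, Nonempty (b ⟶ c) := by
  obtain ⟨p⟩ := (WeaklyConnectedComponent.eq a b).1 (Subsingleton.elim _ _)
  cases p with
  | nil => exact absurd rfl hab
  | cons _ e => exact e.elim (fun e => .inl ⟨_, ⟨e⟩⟩) fun e => .inr ⟨_, ⟨e⟩⟩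

lemma Path.length_le_card [Fintype V] (hacyclic : ∀ (a : V) (p : Path a a), p = Path.nil)
    {a b : V} (p : Path a b) : p.length ≤ Fintype.card V := by
  classical
  let pred (b : V) : Finset V := {c | ∃ q : Path c b, q.length ≠ 0}
  suffices ∀ {b} (p : Path a b), p.length ≤ (pred b).card from
    (this p).trans (Finset.card_le_univ _)
  intro b p
  induction p with
  | nil => simp
  | @cons c d p e ih =>
    have hsub : pred c ⊂ pred d := by
      refine (Finset.ssubset_iff_of_subset fun x hx => ?_).2 ⟨c, ?_, ?_⟩
      · simp only [pred, Finset.mem_filter, Finset.mem_univ, true_and] at hx ⊢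
        obtain ⟨q, -⟩ := hx
        exact ⟨q.cons e, by simp⟩
      · simpa [pred] using ⟨e.toPath, by simp⟩
      · simp only [pred, Finset.mem_filter, Finset.mem_univ, true_and, not_exists]
        intro q hq
        exact hq (by rw [hacyclic c q, Path.length_nil])
    exact Nat.succ_le_of_lt (ih.trans_lt (Finset.card_lt_card hsub))

end Quiver

lemma IsIdempotentElem.eq_zero_or_eq_one_of_isUnit_or_isUnit_one_sub {R : Type*} [Ring R]
    {e : R} (he : IsIdempotentElem e) (h : IsUnit e ∨ IsUnit (1 - e)) : e = 0 ∨ e = 1 := by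
  rcases h with h | h
  · exact .inr ((IsIdempotentElem.iff_eq_one_of_isUnit h).1 he)
  · exact .inl (sub_eq_self.1 ((IsIdempotentElem.iff_eq_one_of_isUnit h).1 he.one_sub))

lemma isUnit_or_isUnit_one_sub_of_isNilpotent_sub {K R : Type*} [Field K] [Ring R]
    (φ : K →+* R) {x : R} (c : K) (hc : Commute (φ c) x) (hx : IsNilpotent (x - φ c)) :
    IsUnit x ∨ IsUnit (1 - x) := by
  rcases eq_or_ne c 0 with rfl | hc0
  · exact .inr (by simpa using hx.isUnit_one_sub)
  · exact .inl (by simpa using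
      hx.isUnit_add_right_of_commute ((IsUnit.mk0 c hc0).map φ) ((hc.sub_right rfl).symm))

lemma AddMonoid.End.isNilpotent_of_mapsTo {M : Type*} [AddCommMonoid M] (g : AddMonoid.End M)
    (F : ℕ → Set M) (N : ℕ) (h0 : ∀ x, x ∈ F 0) (hN : ∀ x ∈ F N, x = 0)
    (hg : ∀ k, Set.MapsTo g (F k) (F (k + 1))) : IsNilpotent g := by
  have hpow : ∀ n x, (g ^ n) x ∈ F n := by
    intro n
    induction n with
    | zero => exact h0
    | succ n ih => exact fun x => pow_succ' g n ▸ hg n (ih x)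
  exact ⟨N, AddMonoidHom.ext fun x => hN _ (hpow N x)⟩

abbrev PathIndex (V : Type*) [Quiver V] := Σ (a : V) (b : V), Quiver.Path a b

lemma PathIndex.ne_of_length_ne {V : Type*} [Quiver V] {s t : PathIndex V}
    (h : s.2.2.length ≠ t.2.2.length) : s ≠ t :=
  fun hst => h (hst ▸ rfl)

section PathBasis

variable {K : Type*} [CommRing K] {V : Type*} [Quiver V] {A : Type*} [Ring A] [Algebra K A]

structure IsPathBasis (bas : Module.Basis (PathIndex V) K A) : Prop where
  mul_comp {i j k : V} (p : Quiver.Path i j) (q : Quiver.Path j k) :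
    bas ⟨i, j, p⟩ * bas ⟨j, k, q⟩ = bas ⟨i, k, p.comp q⟩
  mul_of_ne {i j j' k : V} (p : Quiver.Path i j) (q : Quiver.Path j' k) (h : j ≠ j') :
    bas ⟨i, j, p⟩ * bas ⟨j', k, q⟩ = 0

namespace Module.Basis

variable (bas : Module.Basis (PathIndex V) K A)

def lengthFiltration (k : ℕ) : Submodule K A :=
  Submodule.span K (bas '' {s | k ≤ s.2.2.length})

variable {bas}

lemma mem_lengthFiltration_iff {k : ℕ} {x : A} :
    x ∈ bas.lengthFiltration k ↔
      ∀ s : PathIndex V, s.2.2.length < k → bas.repr x s = 0 := by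
  simp only [lengthFiltration, mem_span_image, Set.subset_def, Finset.mem_coe,
    Finsupp.mem_support_iff, Set.mem_ofPred_eq]
  exact forall_congr' fun s => by rw [not_imp_comm, not_le]

lemma mem_lengthFiltration_zero (x : A) : x ∈ bas.lengthFiltration 0 :=
  mem_lengthFiltration_iff.2 fun _ h => absurd h (Nat.not_lt_zero _)

lemma lengthFiltration_antitone : Antitone bas.lengthFiltration :=
  fun _ _ hjk => Submodule.span_mono (Set.image_mono fun _ hs => le_trans hjk hs)

lemma mem_lengthFiltration_one_iff {x : A} :
    x ∈ bas.lengthFiltration 1 ↔ ∀ a : V, bas.repr x ⟨a, a, .nil⟩ = 0 := by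
  refine mem_lengthFiltration_iff.trans ⟨fun h a => h _ Nat.zero_lt_one, ?_⟩
  rintro h ⟨a, b, p⟩ hp
  cases p with
  | nil => exact h a
  | cons p e => simp at hp

lemma eq_zero_of_mem_lengthFiltration_card_succ [Fintype V]
    (hacyclic : ∀ (a : V) (p : Quiver.Path a a), p = Quiver.Path.nil) {x : A}
    (hx : x ∈ bas.lengthFiltration (Fintype.card V + 1)) : x = 0 :=
  bas.repr.map_eq_zero_iff.1 <| Finsupp.ext fun s =>
    mem_lengthFiltration_iff.1 hx s (Nat.lt_succ_of_le (s.2.2.length_le_card hacyclic))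

end Module.Basis

namespace IsPathBasis

variable {bas : Module.Basis (PathIndex V) K A} (hbas : IsPathBasis bas)
include hbas

lemma basis_mul_mem_lengthFiltration (t : PathIndex V) {k : ℕ} {x : A}
    (hx : x ∈ bas.lengthFiltration k) :
    bas t * x ∈ bas.lengthFiltration (t.2.2.length + k) := by
  suffices bas.lengthFiltration k ≤
      (bas.lengthFiltration _).comap (LinearMap.mulLeft K (bas t)) from this hx
  refine Submodule.span_le.2 ?_
  rintro _ ⟨⟨c, d, p⟩, hp, rfl⟩
  obtain ⟨a, b, q⟩ := t
  by_cases hbc : b = c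
  · subst hbc
    refine Submodule.subset_span ⟨⟨a, d, q.comp p⟩, ?_, (hbas.mul_comp q p).symm⟩
    simp only [Set.mem_ofPred_eq, Quiver.Path.length_comp] at hp ⊢
    omega
  · simp [hbas.mul_of_ne q p hbc]

lemma one_eq_sum [Fintype V] : (1 : A) = ∑ i : V, bas ⟨i, i, .nil⟩ := by
  have h : LinearMap.mulLeft K (∑ i : V, bas ⟨i, i, .nil⟩) = LinearMap.id := by
    refine bas.ext fun ⟨c, d, p⟩ => ?_
    rw [LinearMap.mulLeft_apply, Finset.sum_mul, Finset.sum_eq_single c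
      (fun i _ hi => hbas.mul_of_ne _ _ hi) (by simp), hbas.mul_comp, Quiver.Path.nil_comp]
    rfl
  simpa using (LinearMap.congr_fun h 1).symm

lemma repr_basis_mul_self {a b : V} (q : Quiver.Path a b) (x : A) :
    bas.repr (bas ⟨a, b, q⟩ * x) ⟨a, b, q⟩ = bas.repr x ⟨b, b, .nil⟩ := by
  suffices (bas.coord ⟨a, b, q⟩).comp (LinearMap.mulLeft K (bas ⟨a, b, q⟩)) =
      bas.coord ⟨b, b, .nil⟩ from LinearMap.congr_fun this x
  refine bas.ext fun ⟨c, d, p⟩ => ?_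
  simp only [LinearMap.comp_apply, LinearMap.mulLeft_apply, Module.Basis.coord_apply,
    Module.Basis.repr_self]
  by_cases hbc : b = c
  · subst hbc
    rw [hbas.mul_comp, Module.Basis.repr_self]
    cases p with
    | nil => simp
    | cons p e =>
      rw [Finsupp.single_eq_of_ne (PathIndex.ne_of_length_ne (by
          simp only [Quiver.Path.comp_cons, Quiver.Path.length_cons, Quiver.Path.length_comp]
          omega)),
        Finsupp.single_eq_of_ne (PathIndex.ne_of_length_ne (by simp))]
  · rw [hbas.mul_of_ne q p hbc, map_zero, Finsupp.zero_apply,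
      Finsupp.single_eq_of_ne fun h => hbc (congrArg Sigma.fst h)]

lemma repr_mul_basis_self {a b : V} (q : Quiver.Path a b) (x : A) :
    bas.repr (x * bas ⟨a, b, q⟩) ⟨a, b, q⟩ = bas.repr x ⟨a, a, .nil⟩ := by
  suffices (bas.coord ⟨a, b, q⟩).comp (LinearMap.mulRight K (bas ⟨a, b, q⟩)) =
      bas.coord ⟨a, a, .nil⟩ from LinearMap.congr_fun this x
  refine bas.ext fun ⟨c, d, p⟩ => ?_
  simp only [LinearMap.comp_apply, LinearMap.mulRight_apply, Module.Basis.coord_apply,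
    Module.Basis.repr_self]
  by_cases hda : d = a
  · subst hda
    rw [hbas.mul_comp, Module.Basis.repr_self]
    cases p with
    | nil => simp
    | cons p e =>
      rw [Finsupp.single_eq_of_ne (PathIndex.ne_of_length_ne (by simp)),
        Finsupp.single_eq_of_ne (PathIndex.ne_of_length_ne (by simp))]
  · rw [hbas.mul_of_ne p q hda, map_zero, Finsupp.zero_apply,
      Finsupp.single_eq_of_ne fun h => hda (congrArg (·.2.1) h).symm]

lemma repr_one_nil (a : V) : bas.repr (1 : A) ⟨a, a, .nil⟩ = 1 := by
  simpa using (hbas.repr_basis_mul_self .nil (1 : A)).symm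

end IsPathBasis

end PathBasis

section Bimodule

variable {K A : Type u} [Field K] [Ring A] [Algebra K A] {B : Subalgebra K A}
  {f g : AddMonoid.End A}

lemma isBimoduleEndo_toAddMonoidEnd (c : K) : IsBimoduleEndo B (Module.toAddMonoidEnd K A c) :=
  fun b _ x => ⟨(mul_smul_comm c b x).symm, (smul_mul_assoc c x b).symm⟩

namespace IsBimoduleEndo

lemma sub (hf : IsBimoduleEndo B f) (hg : IsBimoduleEndo B g) : IsBimoduleEndo B (f - g) :=
  fun b hb x =>
    ⟨show f (b * x) - g (b * x) = b * (f x - g x) by rw [(hf b hb x).1, (hg b hb x).1, mul_sub],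
      show f (x * b) - g (x * b) = (f x - g x) * b by rw [(hf b hb x).2, (hg b hb x).2, sub_mul]⟩

lemma map_smul (hf : IsBimoduleEndo B f) (c : K) (x : A) : f (c • x) = c • f x := by
  simpa only [Algebra.smul_def] using (hf _ (B.algebraMap_mem c) x).1

lemma commute_toAddMonoidEnd (hf : IsBimoduleEndo B f) (c : K) :
    Commute (Module.toAddMonoidEnd K A c) f :=
  AddMonoidHom.ext fun x => (hf.map_smul c x).symm

lemma map_eq_mul_map_one (hf : IsBimoduleEndo B f) {b : A} (hb : b ∈ B) : f b = b * f 1 := by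
  simpa using (hf b hb 1).1

lemma map_eq_map_one_mul (hf : IsBimoduleEndo B f) {b : A} (hb : b ∈ B) : f b = f 1 * b := by
  simpa using (hf b hb 1).2

variable {V : Type*} [Quiver V] [Subsingleton (Quiver.WeaklyConnectedComponent V)]
  {bas : Module.Basis (PathIndex V) K A} (hf : IsBimoduleEndo B f) (hbas : IsPathBasis bas)
  (hB : ∀ (i j : V) (p : Quiver.Path i j), p.length ≠ 0 → bas ⟨i, j, p⟩ ∈ B)
include hf hbas hB

lemma repr_map_one_nil_eq (a b : V) :
    bas.repr (f 1) ⟨a, a, .nil⟩ = bas.repr (f 1) ⟨b, b, .nil⟩ := by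
  refine Quiver.apply_eq_apply_of_forall_hom (fun v => bas.repr (f 1) ⟨v, v, .nil⟩)
    (fun a b e => ?_) a b
  have hq := hB _ _ e.toPath (by simp)
  have h := congrArg (bas.repr · ⟨a, b, e.toPath⟩)
    ((hf.map_eq_map_one_mul hq).symm.trans (hf.map_eq_mul_map_one hq))
  simpa only [hbas.repr_mul_basis_self, hbas.repr_basis_mul_self] using h

lemma repr_map_nil_eq_zero_of_ne {i a : V} (hia : i ≠ a) :
    bas.repr (f (bas ⟨i, i, .nil⟩)) ⟨a, a, .nil⟩ = 0 := by
  rcases Quiver.exists_hom_of_ne hia with ⟨c, ⟨e⟩⟩ | ⟨c, ⟨e⟩⟩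
  · have h := (hf _ (hB _ _ e.toPath (by simp)) (bas ⟨i, i, .nil⟩)).1
    rw [hbas.mul_of_ne _ _ hia.symm, map_zero] at h
    simpa [hbas.repr_basis_mul_self] using congrArg (bas.repr · ⟨c, a, e.toPath⟩) h.symm
  · have h := (hf _ (hB _ _ e.toPath (by simp)) (bas ⟨i, i, .nil⟩)).2
    rw [hbas.mul_of_ne _ _ hia, map_zero] at h
    simpa [hbas.repr_mul_basis_self] using congrArg (bas.repr · ⟨a, c, e.toPath⟩) h.symm

variable [Fintype V]

lemma map_nil_mem_lengthFiltration_one (h1 : f 1 ∈ bas.lengthFiltration 1) (i : V) :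
    f (bas ⟨i, i, .nil⟩) ∈ bas.lengthFiltration 1 := by
  rw [Module.Basis.mem_lengthFiltration_one_iff] at h1 ⊢
  intro a
  rcases eq_or_ne i a with rfl | hia
  · have h := h1 i
    rwa [hbas.one_eq_sum, map_sum, map_sum, Finsupp.finsetSum_apply, Finset.sum_eq_single i
      (fun j _ hj => hf.repr_map_nil_eq_zero_of_ne hbas hB hj) (by simp)] at h
  · exact hf.repr_map_nil_eq_zero_of_ne hbas hB hia

lemma map_basis_mem_lengthFiltration (h1 : f 1 ∈ bas.lengthFiltration 1) (s : PathIndex V) :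
    f (bas s) ∈ bas.lengthFiltration (s.2.2.length + 1) := by
  obtain ⟨a, b, q⟩ := s
  cases q with
  | nil => exact hf.map_nil_mem_lengthFiltration_one hbas hB h1 a
  | cons q e =>
    rw [hf.map_eq_mul_map_one (hB _ _ _ (by simp))]
    exact hbas.basis_mul_mem_lengthFiltration _ h1

lemma isNilpotent (hacyclic : ∀ (a : V) (p : Quiver.Path a a), p = Quiver.Path.nil)
    (h1 : f 1 ∈ bas.lengthFiltration 1) : IsNilpotent f := by
  refine f.isNilpotent_of_mapsTo (fun k => bas.lengthFiltration k) (Fintype.card V + 1)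
    Module.Basis.mem_lengthFiltration_zero
    (fun _ => Module.Basis.eq_zero_of_mem_lengthFiltration_card_succ hacyclic) ?_
  intro k x hx
  induction hx using Submodule.span_induction with
  | mem _ hy =>
    obtain ⟨s, hs, rfl⟩ := hy
    exact Module.Basis.lengthFiltration_antitone (Nat.succ_le_succ hs)
      (hf.map_basis_mem_lengthFiltration hbas hB h1 s)
  | zero => simp
  | add y z _ _ hy hz => simpa using add_mem hy hz
  | smul c y _ hy => simpa [hf.map_smul] using Submodule.smul_mem _ c hy

lemma exists_isNilpotent_sub
    (hacyclic : ∀ (a : V) (p : Quiver.Path a a), p = Quiver.Path.nil) :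
    ∃ c : K, IsNilpotent (f - Module.toAddMonoidEnd K A c) := by
  obtain ⟨c, hc⟩ : ∃ c : K, ∀ a : V, bas.repr (f 1) ⟨a, a, .nil⟩ = c := by
    rcases isEmpty_or_nonempty V with _ | ⟨⟨i⟩⟩
    · exact ⟨0, isEmptyElim⟩
    · exact ⟨_, fun a => hf.repr_map_one_nil_eq hbas hB a i⟩
  refine ⟨c, (hf.sub (isBimoduleEndo_toAddMonoidEnd c)).isNilpotent hbas hB hacyclic ?_⟩
  refine Module.Basis.mem_lengthFiltration_one_iff.2 fun a => ?_
  show bas.repr (f 1 - c • 1) ⟨a, a, .nil⟩ = 0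
  simp [hc, hbas.repr_one_nil]

lemma isUnit_or_isUnit_one_sub
    (hacyclic : ∀ (a : V) (p : Quiver.Path a a), p = Quiver.Path.nil) :
    IsUnit f ∨ IsUnit (1 - f) := by
  obtain ⟨c, hc⟩ := hf.exists_isNilpotent_sub hbas hB hacyclic
  exact isUnit_or_isUnit_one_sub_of_isNilpotent_sub _ c (hf.commute_toAddMonoidEnd c) hc

end IsBimoduleEndo

end Bimodule

/-- Let `Q` be a finite connected acyclic quiver, `A = KQ` its path
algebra over an algebraically closed field `K` (axiomatized by a basis of paths
multiplying by concatenation), and `B = K·1_A + rad A` the primary arrow subalgebra.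
Then `A` is indecomposable as a `B`-`B`-bimodule (the only idempotent bimodule
endomorphisms are `0` and `1`); indeed its bimodule endomorphism ring
`End(_B A _B)` is a local ring (for every bimodule endomorphism `f`, either `f` or
`1 - f` is invertible). -/
theorem arrow_subalgebra_bimodule_indecomposable
    (K : Type u) [Field K] [IsAlgClosed K]
    (V : Type u) [Quiver.{u+1} V] [Fintype V] [∀ a b : V, Finite (a ⟶ b)]
    (hacyclic : ∀ (a : V) (p : Quiver.Path a a), p = Quiver.Path.nil)
    (hconn : Subsingleton (Quiver.WeaklyConnectedComponent V)) (hne : Nonempty V)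
    (A : Type u) [Ring A] [Algebra K A]
    (bas : Module.Basis (Σ (a : V) (b : V), Quiver.Path a b) K A)
    (hmul : ∀ (i j k : V) (p : Quiver.Path i j) (q : Quiver.Path j k),
      bas ⟨i, j, p⟩ * bas ⟨j, k, q⟩ = bas ⟨i, k, p.comp q⟩)
    (hzero : ∀ (i j j' k : V) (p : Quiver.Path i j) (q : Quiver.Path j' k), j ≠ j' →
      bas ⟨i, j, p⟩ * bas ⟨j', k, q⟩ = 0) :
    (Nontrivial A ∧
      ∀ f : AddMonoid.End A,
        IsBimoduleEndo (Algebra.adjoin K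
          {x : A | ∃ (i j : V) (p : Quiver.Path i j), p.length ≠ 0 ∧ x = bas ⟨i, j, p⟩}) f →
        f * f = f → f = 0 ∨ f = 1) ∧
    (∀ f : AddMonoid.End A,
      IsBimoduleEndo (Algebra.adjoin K
        {x : A | ∃ (i j : V) (p : Quiver.Path i j), p.length ≠ 0 ∧ x = bas ⟨i, j, p⟩}) f →
      IsUnit f ∨ IsUnit (1 - f)) := by
  have hbas : IsPathBasis bas :=
    ⟨fun p q => hmul _ _ _ p q, fun p q h => hzero _ _ _ _ p q h⟩
  have hB : ∀ (i j : V) (p : Quiver.Path i j), p.length ≠ 0 → bas ⟨i, j, p⟩ ∈ Algebra.adjoin K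
      {x : A | ∃ (i j : V) (p : Quiver.Path i j), p.length ≠ 0 ∧ x = bas ⟨i, j, p⟩} :=
    fun i j p hp => Algebra.subset_adjoin ⟨i, j, p, hp, rfl⟩
  have hlocal := fun f (hf : IsBimoduleEndo _ f) => hf.isUnit_or_isUnit_one_sub hbas hB hacyclic
  obtain ⟨i⟩ := hne
  exact ⟨⟨nontrivial_of_ne _ 0 (bas.ne_zero ⟨i, i, .nil⟩), fun f hf hff =>
    IsIdempotentElem.eq_zero_or_eq_one_of_isUnit_or_isUnit_one_sub hff (hlocal f hf)⟩, hlocal⟩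
end
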